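/- Let L be the Bell rule operator and for natural numbers n and b ≥ 1 set f_n^{(b)} = (L^n(X^b)) evaluated at X = 1. Then for every b ≥ 1 and every n ≥ 1, f_n^{(b+1)} = Σ_{k=0}^{n-1} C(n-1,k) · f_{k+1}^{(b)} + f_{n-1}^{(b+1)}. -/

import Mathlib

/-!
On polynomials divisible by `X` the rule `L (X^k) = (k - 1) X^k + X^(k+1)` gives
`L (X * p) = X * (L + 1) p`, hence `L^n (X^(b+1)) = X * (L + 1)^n (X^b)`. Splitting
`(L + 1)^n = (L + 1)^(n-1) L + (L + 1)^(n-1)`, the second summand gives back `L^(n-1) (X^(b+1))`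
and the binomial expansion of the first, evaluated at `1`, gives `∑ C(n-1,k) f_{k+1}^{(b)}`.
-/

open Polynomial

theorem Module.End.add_one_pow_apply {R M : Type*} [Semiring R] [AddCommMonoid M] [Module R M]
    (L : Module.End R M) (m : ℕ) (v : M) :
    ((L + 1) ^ m) v = ∑ k ∈ Finset.range (m + 1), (m.choose k : R) • (L ^ k) v := by
  rw [(Commute.one_right L).add_pow, LinearMap.sum_apply]
  refine Finset.sum_congr rfl fun k _ => ?_
  rw [one_pow, mul_one, ← Nat.cast_comm, Module.End.mul_apply, Module.End.natCast_apply,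
    Nat.cast_smul_eq_nsmul]

namespace Polynomial

variable {R : Type*} [CommRing R] {L : Module.End R R[X]}
  (hL : ∀ k : ℕ, 1 ≤ k → L (X ^ k) = ((k : R) - 1) • X ^ k + X ^ (k + 1))
include hL

theorem X_dvd_map {p : R[X]} (hp : X ∣ p) : X ∣ L p := by
  obtain ⟨q, rfl⟩ := hp
  induction q using Polynomial.induction_on' with
  | add p q hp hq => rw [mul_add, map_add]; exact dvd_add hp hq
  | monomial n a =>
    rw [← smul_X_eq_monomial, mul_smul_comm, ← pow_succ', map_smul, hL (n + 1) (by omega),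
      X_dvd_iff]
    simp [coeff_X_pow]

theorem map_X_mul {p : R[X]} (hp : X ∣ p) : L (X * p) = X * (L + 1) p := by
  obtain ⟨q, rfl⟩ := hp
  induction q using Polynomial.induction_on' with
  | add p q hp hq => simp only [mul_add, map_add, hp, hq]
  | monomial n a =>
    have hX : ∀ j, (X : R[X]) * (a • X ^ j) = a • X ^ (j + 1) := fun j => by
      rw [mul_smul_comm, pow_succ']
    rw [← smul_X_eq_monomial, hX, hX, LinearMap.add_apply, Module.End.one_apply, map_smul,
      map_smul, hL (n + 1) (by omega), hL (n + 1 + 1) (by omega)]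
    simp only [mul_add, mul_smul_comm, ← pow_succ']
    push_cast
    module

theorem X_dvd_add_one_pow_apply (m : ℕ) {p : R[X]} (hp : X ∣ p) : X ∣ ((L + 1) ^ m) p := by
  induction m with
  | zero => simpa using hp
  | succ m ih =>
    rw [pow_succ', Module.End.mul_apply, LinearMap.add_apply, Module.End.one_apply]
    exact dvd_add (X_dvd_map hL ih) ih

theorem pow_map_X_mul (m : ℕ) {p : R[X]} (hp : X ∣ p) :
    (L ^ m) (X * p) = X * ((L + 1) ^ m) p := by
  induction m with
  | zero => simp
  | succ m ih =>
    rw [pow_succ', Module.End.mul_apply, ih, map_X_mul hL (X_dvd_add_one_pow_apply hL m hp),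
      ← Module.End.mul_apply, ← pow_succ']

theorem eval_one_pow_map_X_pow_succ (n : ℕ) {b : ℕ} (hb : 1 ≤ b) :
    ((L ^ n) (X ^ (b + 1))).eval 1 = (((L + 1) ^ n) (X ^ b)).eval 1 := by
  rw [pow_succ', pow_map_X_mul hL n (dvd_pow_self X (by omega)), eval_mul, eval_X, one_mul]

end Polynomial

/-- For the Bell rule operator `L` and the associated family of
sequences `f n b = [L^n(X^b)]_{X=1}`, one has, for `b ≥ 1` and `n ≥ 1`,
`f_n^{(b+1)} = Σ_{k=0}^{n-1} C(n-1,k) f_{k+1}^{(b)} + f_{n-1}^{(b+1)}`. -/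
theorem bell_sequence_recursion
    (L : Module.End ℝ (Polynomial ℝ))
    (hL : ∀ k : ℕ, 1 ≤ k → L (X ^ k) = ((k : ℝ) - 1) • X ^ k + X ^ (k + 1))
    (f : ℕ → ℕ → ℝ) (hf : ∀ n b, f n b = ((L ^ n) (X ^ b)).eval 1)
    (b : ℕ) (hb : 1 ≤ b) (n : ℕ) (hn : 1 ≤ n) :
    f n (b + 1) =
      (∑ k ∈ Finset.range n, (Nat.choose (n - 1) k : ℝ) * f (k + 1) b) +
        f (n - 1) (b + 1) := by
  obtain ⟨m, rfl⟩ := Nat.exists_eq_add_of_le' hn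
  have hsplit : ((L + 1) ^ (m + 1)) (X ^ b) =
      ((L + 1) ^ m) (L (X ^ b)) + ((L + 1) ^ m) (X ^ b) := by
    rw [pow_succ, Module.End.mul_apply, LinearMap.add_apply, Module.End.one_apply, map_add]
  rw [Nat.add_sub_cancel, hf, hf, eval_one_pow_map_X_pow_succ hL _ hb,
    eval_one_pow_map_X_pow_succ hL _ hb, hsplit, eval_add, Module.End.add_one_pow_apply,
    eval_finsetSum]
  congr 1
  refine Finset.sum_congr rfl fun k _ => ?_
  rw [eval_smul, smul_eq_mul, hf, pow_succ, Module.End.mul_apply]
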